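/- arXiv:1905.11966 — 3 statements merged into one kernel-verified Lean document; each statement's English description precedes it below -/
import Mathlib

section
/- Let R be a binary relation on a type α, and define the well-founded part WP(R) as the least subset of α closed under progressiveness: if every x with R x a lies in WP(R), then a ∈ WP(R). Then WP(R) satisfies the induction principle: for any predicate P, if (∀ a, (∀ x, R x a → x ∈ WP(R) ∧ P x) → P a), then every element of WP(R) satisfies P. Moreover, WP(R) can be realized as the set {a | a ◁ ∅} for the inductively generated basic cover on α with index family I a = α and C a i = {z | R z a}. -/
inductive Cover {A : Type*} (I : A → Type*) (C : ∀ a, I a → Set A) (V : Set A) : A → Prop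
  | rf {a : A} : a ∈ V → Cover I C V a
  | tr {a : A} (i : I a) : (∀ y ∈ C a i, Cover I C V y) → Cover I C V a

/-- The well-founded part of R: the least subset closed under progressiveness. -/
def WP {α : Type*} (R : α → α → Prop) : Set α :=
  ⋂₀ {A : Set α | ∀ a, (∀ x, R x a → x ∈ A) → a ∈ A}

theorem Cover.mem_of_closed {A : Type*} {I : A → Type*} {C : ∀ a, I a → Set A} {V S : Set A}
    (hV : V ⊆ S) (hS : ∀ a (i : I a), C a i ⊆ S → a ∈ S) {a : A} (h : Cover I C V a) :
    a ∈ S := by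
  induction h with
  | rf ha => exact hV ha
  | tr i _ ih => exact hS _ i ih

section WellFoundedPart

variable {α : Type*} (R : α → α → Prop)

theorem WP_subset_of_progressive {S : Set α} (hS : ∀ a, (∀ x, R x a → x ∈ S) → a ∈ S) :
    WP R ⊆ S :=
  Set.sInter_subset_of_mem hS

theorem mem_WP_of_forall_rel {a : α} (h : ∀ x, R x a → x ∈ WP R) : a ∈ WP R :=
  fun S hS => hS a fun x hx => h x hx S hS

theorem WP.induction (P : α → Prop) (step : ∀ a, (∀ x, R x a → x ∈ WP R ∧ P x) → P a) :
    ∀ a ∈ WP R, P a := fun _ ha =>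
  (WP_subset_of_progressive R (S := {b | b ∈ WP R ∧ P b})
    (fun b hb => ⟨mem_WP_of_forall_rel R fun x hx => (hb x hx).1, step b hb⟩) ha).2

theorem WP_eq_setOf_cover {I : α → Type*} (hI : ∀ a, Nonempty (I a)) :
    WP R = {a | Cover I (fun a _ => {z | R z a}) ∅ a} := by
  apply Set.Subset.antisymm
  · exact WP_subset_of_progressive R fun a h => Cover.tr (hI a).some h
  · exact fun a => Cover.mem_of_closed (Set.empty_subset _)
      (fun b _ hb => mem_WP_of_forall_rel R hb)

end WellFoundedPart

theorem stmt12 {α : Type*} (R : α → α → Prop) :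
    (∀ P : α → Prop,
      (∀ a, (∀ x, R x a → x ∈ WP R ∧ P x) → P a) → ∀ a ∈ WP R, P a) ∧
    WP R = {a | Cover (fun _ : α => α) (fun a _ => {z | R z a}) (∅ : Set α) a} :=
  ⟨WP.induction R, WP_eq_setOf_cover R fun a => ⟨a⟩⟩
end

section
/- In the tree cover ◁ over a finite type E = Fin 2 (Cantor formal topology) generated by reflexivity, the initial-segment rule, and the branching rule, every covered list is covered by a finite subset: if l ◁ V then there exists a finite set V₀ ⊆ V with l ◁ V₀. -/
/- A derivation of `l ◁ V` uses only finitely many axioms `rf`, because `branch` has finitely many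
premises when `E` is finite; collecting the members of `V` they mention gives `V₀`. -/

inductive TCover (E : Type*) : List E → Set (List E) → Prop
  | rf {l V} : l ∈ V → TCover E l V
  | seg {l V} (t : List E) : TCover E l V → TCover E (l ++ t) V
  | branch {l V} : (∀ x : E, TCover E (l ++ [x]) V) → TCover E l V

namespace TCover

variable {E : Type*}

theorem mono {l : List E} {V W : Set (List E)} (h : TCover E l V) (hVW : V ⊆ W) :
    TCover E l W := by
  induction h with
  | rf hm => exact .rf (hVW hm)
  | seg t _ ih => exact .seg t (ih hVW)
  | branch _ ih => exact .branch fun x => ih x hVW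

theorem exists_finite_subset [Finite E] {l : List E} {V : Set (List E)} (h : TCover E l V) :
    ∃ V₀ ⊆ V, V₀.Finite ∧ TCover E l V₀ := by
  induction h with
  | @rf l _ hm => exact ⟨{l}, Set.singleton_subset_iff.2 hm, Set.finite_singleton l, .rf rfl⟩
  | seg t _ ih =>
    obtain ⟨V₀, hsub, hfin, hc⟩ := ih
    exact ⟨V₀, hsub, hfin, .seg t hc⟩
  | branch _ ih =>
    choose W hsub hfin hc using ih
    exact ⟨⋃ x, W x, Set.iUnion_subset hsub, Set.finite_iUnion hfin,
      .branch fun x => (hc x).mono (Set.subset_iUnion W x)⟩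

end TCover

theorem stmt16 (l : List (Fin 2)) (V : Set (List (Fin 2))) (h : TCover (Fin 2) l V) :
    ∃ V₀ : Set (List (Fin 2)), V₀ ⊆ V ∧ V₀.Finite ∧ TCover (Fin 2) l V₀ :=
  h.exists_finite_subset
end

section
/- In Joyal's inductive cover ◁ᵣ on ℚ × ℚ, the cover relation is stable under shrinking on the covered set's side combined with transitivity: if ⟨p,q⟩ ◁ᵣ U and every element ⟨p',q'⟩ of U satisfies ⟨p',q'⟩ ◁ᵣ W, then ⟨p,q⟩ ◁ᵣ W. -/
inductive JCover : ℚ × ℚ → Set (ℚ × ℚ) → Prop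
  | rf {pq U} : pq ∈ U → JCover pq U
  | empty {p q U} : q ≤ p → JCover (p, q) U
  | shrink {p q U} (p' q' : ℚ) : p' ≤ p → p < q → q ≤ q' →
      JCover (p', q') U → JCover (p, q) U
  | split {p q U} (r s : ℚ) : p ≤ r → r < s → s ≤ q →
      JCover (p, s) U → JCover (r, q) U → JCover (p, q) U
  | wc {p q U} : (∀ p' q' : ℚ, p < p' → p' < q' → q' < q → JCover (p', q') U) →
      JCover (p, q) U

theorem JCover.trans {a : ℚ × ℚ} {U W : Set (ℚ × ℚ)} (h : JCover a U)
    (hU : ∀ b ∈ U, JCover b W) : JCover a W := by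
  induction h with
  | rf hmem => exact hU _ hmem
  | empty hle => exact .empty hle
  | shrink p' q' hp hpq hq _ ih => exact .shrink p' q' hp hpq hq (ih hU)
  | split r s hr hrs hs _ _ ihl ihr => exact .split r s hr hrs hs (ihl hU) (ihr hU)
  | wc _ ih => exact .wc fun p' q' hp hpq hq => ih p' q' hp hpq hq hU

theorem stmt19 (p q : ℚ) (U W : Set (ℚ × ℚ)) (h : JCover (p, q) U)
    (hU : ∀ pq ∈ U, JCover pq W) : JCover (p, q) W :=
  h.trans hU
end
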